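/- Let G be a finite undirected graph with minimum degree at least D ≥ 1, α ∈ (0,1), and let r^(0) = e_s (the indicator of a source node s). Define r^(j) by the push-flow recursion r^(j)_v = ((1-α)/2)·(r^(j-1)_v + Σ_{u:(u,v)∈E} r^(j-1)_u/d(u)). Then for all j ≥ 1 and all u ≠ s, r^(j)_u ≤ (1-α)^j / D. -/

import Mathlib

/-! Each push step scales the total mass by exactly `1 - α`: the neighbour sums redistribute
the mass `r u` of every vertex `u` in `d(u)` equal shares, one to each neighbour. So after `j`
steps the residual is a nonnegative vector of total mass `(1 - α) ^ j`, and the `D`-th part of it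
is all a vertex `v` can collect from its neighbours. Since `r⁽⁰⁾` vanishes off `s`, induction on `j`
gives `r⁽ʲ⁾ v ≤ (1 - α) ^ j / D` for `v ≠ s`, the step being
`(1 - α) / 2 · ((1 - α) ^ j / D + (1 - α) ^ j / D)`. -/

open Finset

namespace SimpleGraph

variable {V : Type*} [Fintype V] (G : SimpleGraph V) [DecidableRel G.Adj]

theorem sum_sum_neighborFinset {M : Type*} [AddCommMonoid M] (f : V → M) :
    ∑ v, ∑ u ∈ G.neighborFinset v, f u = ∑ u, G.degree u • f u := by
  rw [Finset.sum_comm' (t' := univ) (s' := fun u => G.neighborFinset u)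
    (fun v u => by simp [mem_neighborFinset, G.adj_comm])]
  simp only [sum_const, card_neighborFinset_eq_degree]

theorem sum_sum_neighborFinset_div_degree (hdeg : ∀ v, G.degree v ≠ 0) (x : V → ℝ) :
    ∑ v, ∑ u ∈ G.neighborFinset v, x u / G.degree u = ∑ u, x u := by
  rw [sum_sum_neighborFinset]
  refine sum_congr rfl fun u _ => ?_
  rw [nsmul_eq_mul, mul_div_cancel₀ _ (Nat.cast_ne_zero.mpr (hdeg u))]

theorem sum_neighborFinset_div_degree_le {D : ℕ} (hD : 0 < D) (hdeg : ∀ v, D ≤ G.degree v)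
    {x : V → ℝ} (hx : 0 ≤ x) (v : V) :
    ∑ u ∈ G.neighborFinset v, x u / G.degree u ≤ (∑ u, x u) / D := by
  have hD' : (0 : ℝ) < D := Nat.cast_pos.mpr hD
  calc ∑ u ∈ G.neighborFinset v, x u / G.degree u
      ≤ ∑ u ∈ G.neighborFinset v, x u / D :=
        sum_le_sum fun u _ => div_le_div_of_nonneg_left (hx u) hD' (Nat.cast_le.mpr (hdeg u))
    _ ≤ (∑ u, x u) / D := by
        rw [← sum_div]
        exact div_le_div_of_nonneg_right
          (sum_le_sum_of_subset_of_nonneg (subset_univ _) fun u _ _ => hx u) hD'.le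

noncomputable def pushFlowStep (α : ℝ) (x : V → ℝ) : V → ℝ :=
  fun v => (1 - α) / 2 * (x v + ∑ u ∈ G.neighborFinset v, x u / G.degree u)

variable {G}

theorem pushFlowStep_nonneg {α : ℝ} (hα : α ≤ 1) {x : V → ℝ} (hx : 0 ≤ x) :
    0 ≤ G.pushFlowStep α x := fun v =>
  mul_nonneg (by linarith) <|
    add_nonneg (hx v) (sum_nonneg fun u _ => div_nonneg (hx u) (Nat.cast_nonneg _))

theorem sum_pushFlowStep (hdeg : ∀ v, G.degree v ≠ 0) (α : ℝ) (x : V → ℝ) :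
    ∑ v, G.pushFlowStep α x v = (1 - α) * ∑ v, x v := by
  simp only [pushFlowStep, ← mul_sum, sum_add_distrib,
    sum_sum_neighborFinset_div_degree G hdeg]
  ring

theorem pushFlowStep_le {D : ℕ} (hD : 0 < D) (hdeg : ∀ v, D ≤ G.degree v) {α : ℝ} (hα : α ≤ 1)
    {x : V → ℝ} (hx : 0 ≤ x) {c : ℝ} (hsum : ∑ u, x u ≤ c) {v : V} (hv : x v ≤ c / D) :
    G.pushFlowStep α x v ≤ (1 - α) * c / D := by
  have hneigh : ∑ u ∈ G.neighborFinset v, x u / G.degree u ≤ c / D :=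
    (G.sum_neighborFinset_div_degree_le hD hdeg hx v).trans
      (div_le_div_of_nonneg_right hsum (Nat.cast_nonneg D))
  calc G.pushFlowStep α x v ≤ (1 - α) / 2 * (c / D + c / D) :=
        mul_le_mul_of_nonneg_left (add_le_add hv hneigh) (by linarith)
    _ = (1 - α) * c / D := by ring

end SimpleGraph

open SimpleGraph in
theorem push_flow_residual_entry_bound {V : Type*} [Fintype V] [DecidableEq V] (G : SimpleGraph V)
    [DecidableRel G.Adj] (D : ℕ) (hD : 1 ≤ D) (hdeg : ∀ v, D ≤ G.degree v)
    (α : ℝ) (hα : α ∈ Set.Ioo (0:ℝ) 1) (s : V)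
    (r : ℕ → V → ℝ) (h0 : ∀ v, r 0 v = if v = s then 1 else 0)
    (hrec : ∀ j v, r (j + 1) v = ((1 - α) / 2) *
      (r j v + ∑ u ∈ G.neighborFinset v, r j u / (G.degree u : ℝ))) :
    ∀ j : ℕ, 1 ≤ j → ∀ u : V, u ≠ s → r j u ≤ (1 - α) ^ j / D := by
  have hα1 : α ≤ 1 := hα.2.le
  have hdeg0 : ∀ v, G.degree v ≠ 0 := fun v => (Nat.lt_of_lt_of_le hD (hdeg v)).ne'
  have hstep : ∀ j, r (j + 1) = G.pushFlowStep α (r j) := fun j => funext (hrec j)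
  have hnonneg : ∀ j, 0 ≤ r j := by
    intro j
    induction j with
    | zero => intro v; rw [h0]; split_ifs <;> norm_num
    | succ j ih => rw [hstep]; exact pushFlowStep_nonneg hα1 ih
  have hmass : ∀ j, ∑ v, r j v = (1 - α) ^ j := by
    intro j
    induction j with
    | zero => simp [h0]
    | succ j ih => rw [hstep, sum_pushFlowStep hdeg0, ih, pow_succ']
  suffices h : ∀ j, ∀ u, u ≠ s → r j u ≤ (1 - α) ^ j / D from fun j _ => h j
  intro j
  induction j with
  | zero => intro u hu; rw [h0, if_neg hu]; positivity
  | succ j ih =>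
    intro u hu
    rw [hstep, pow_succ']
    exact pushFlowStep_le hD hdeg hα1 (hnonneg j) (hmass j).le (ih u hu)
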